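/- Let k ≥ 1, γ ∈ (−1,1), θ_γ = arccos γ, and let ρ̂_k be the kernel polynomial ρ̂_k(t) = (Σ_{j=0}^k T̂ⱼ(γ)T̂ⱼ(t)) / (Σ_{j=0}^k T̂ⱼ(γ)²). Then ∫₋₁¹ [ρ̂_k(s)]²/√(1−s²) ds = 1 / (Σ_{j=0}^k [T̂ⱼ(γ)]²) = (2π/(2k+1)) · 1/(1 + sin((2k+1)θ_γ)/((2k+1) sin θ_γ)). -/

import Mathlib

open Real Polynomial Finset

/-- Normalized Chebyshev polynomials of the first kind:
`T̂₀ = T₀/√π`, `T̂ⱼ = Tⱼ/√(π/2)` for `j ≥ 1`. -/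
noncomputable def ThatP (j : ℕ) : Polynomial ℝ :=
  if j = 0 then Polynomial.C (Real.sqrt Real.pi)⁻¹ * Polynomial.Chebyshev.T ℝ (j : ℤ)
  else Polynomial.C (Real.sqrt (Real.pi / 2))⁻¹ * Polynomial.Chebyshev.T ℝ (j : ℤ)

/-- The kernel polynomial `ρ̂_k(t) = (Σ_{j=0}^k T̂ⱼ(γ)T̂ⱼ(t)) / (Σ_{j=0}^k T̂ⱼ(γ)²)`. -/
noncomputable def rhoHat (k : ℕ) (γ : ℝ) : Polynomial ℝ :=
  Polynomial.C (∑ j ∈ Finset.range (k + 1), (ThatP j).eval γ ^ 2)⁻¹ *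
    ∑ j ∈ Finset.range (k + 1), Polynomial.C ((ThatP j).eval γ) * ThatP j

/-! The `T̂ⱼ` are orthonormal for the Chebyshev measure, so the squared weighted norm of
`ρ̂_k = Σ cⱼ T̂ⱼ / Σ cⱼ²` with `cⱼ = T̂ⱼ(γ)` is `Σ cⱼ² / (Σ cⱼ²)² = 1 / Σ cⱼ²`. Writing
`γ = cos θ`, one has `π T̂ⱼ(cos θ)² = 1 + cos 2jθ` for `j ≥ 1` (and `1` for `j = 0`), and the
Dirichlet kernel identity `2 sin θ Σ_{j ≤ k} cos 2jθ = sin (2k+1)θ + sin θ` sums these to the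
closed form. -/

open MeasureTheory Polynomial.Chebyshev

theorem integral_sum_mul_sq_of_orthonormal {α ι : Type*} [MeasurableSpace α] [DecidableEq ι]
    {μ : Measure α} (s : Finset ι) (e : ι → α → ℝ) (c : ι → ℝ)
    (hint : ∀ i ∈ s, ∀ j ∈ s, Integrable (fun x ↦ e i x * e j x) μ)
    (horth : ∀ i ∈ s, ∀ j ∈ s, ∫ x, e i x * e j x ∂μ = if i = j then 1 else 0) :
    ∫ x, (∑ i ∈ s, c i * e i x) ^ 2 ∂μ = ∑ i ∈ s, c i ^ 2 := by
  have hexpand : ∀ x, (∑ i ∈ s, c i * e i x) ^ 2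
      = ∑ i ∈ s, ∑ j ∈ s, c i * c j * (e i x * e j x) := fun x ↦ by
    rw [sq, Finset.sum_mul_sum]
    exact Finset.sum_congr rfl fun i _ ↦ Finset.sum_congr rfl fun j _ ↦ by ring
  simp_rw [hexpand]
  rw [integral_finsetSum _ fun i hi ↦ integrable_finsetSum _ fun j hj ↦ (hint i hi j hj).const_mul _]
  refine Finset.sum_congr rfl fun i hi ↦ ?_
  rw [integral_finsetSum _ fun j hj ↦ (hint i hi j hj).const_mul _]
  simp_rw [integral_const_mul]
  rw [Finset.sum_congr rfl fun j hj ↦ by rw [horth i hi j hj], Finset.sum_eq_single_of_mem i hi]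
  · simp [sq]
  · intro j _ hji
    simp [hji.symm]

theorem eval_ThatP (j : ℕ) (x : ℝ) :
    (ThatP j).eval x = (√(if j = 0 then π else π / 2))⁻¹ * (T ℝ j).eval x := by
  unfold ThatP
  split_ifs <;> simp

theorem integral_eval_ThatP_mul_eval_ThatP_measureT (i j : ℕ) :
    ∫ x, (ThatP i).eval x * (ThatP j).eval x ∂measureT = if i = j then 1 else 0 := by
  simp_rw [eval_ThatP, mul_mul_mul_comm, integral_const_mul]
  rcases eq_or_ne i j with rfl | hij
  · rw [if_pos rfl, ← mul_inv, Real.mul_self_sqrt (by positivity)]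
    rcases eq_or_ne i 0 with rfl | hi
    · rw [Nat.cast_zero, integral_eval_T_real_mul_self_measureT_zero]; simp [Real.pi_ne_zero]
    · rw [integral_T_real_mul_self_measureT_of_ne_zero hi]; simp [hi, Real.pi_ne_zero]
  · rw [integral_eval_T_real_mul_eval_T_real_measureT_of_ne hij]; simp [hij]

theorem sum_range_eval_ThatP_sq_pos (k : ℕ) (γ : ℝ) :
    0 < ∑ j ∈ range (k + 1), (ThatP j).eval γ ^ 2 := by
  refine lt_of_lt_of_le ?_ (Finset.single_le_sum (fun j _ ↦ sq_nonneg ((ThatP j).eval γ))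
    (Finset.mem_range.mpr k.succ_pos))
  simp [eval_ThatP, Real.pi_pos]

theorem integral_eval_rhoHat_sq_measureT (k : ℕ) (γ : ℝ) :
    ∫ x, (rhoHat k γ).eval x ^ 2 ∂measureT
      = (∑ j ∈ range (k + 1), (ThatP j).eval γ ^ 2)⁻¹ := by
  set a := ∑ j ∈ range (k + 1), (ThatP j).eval γ ^ 2
  have ha : 0 < a := sum_range_eval_ThatP_sq_pos k γ
  have hrho : ∀ x, (rhoHat k γ).eval x
      = ∑ j ∈ range (k + 1), (a⁻¹ * (ThatP j).eval γ) * (ThatP j).eval x := fun x ↦ by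
    simp [rhoHat, eval_finsetSum, Finset.mul_sum, mul_assoc, a]
  simp_rw [hrho]
  rw [integral_sum_mul_sq_of_orthonormal _ _ _
    (fun i _ j _ ↦ integrable_measureT (by fun_prop))
    (fun i _ j _ ↦ integral_eval_ThatP_mul_eval_ThatP_measureT i j)]
  simp_rw [mul_pow, ← Finset.mul_sum]
  change a⁻¹ ^ 2 * a = a⁻¹
  field_simp

theorem pi_mul_eval_ThatP_cos_sq (j : ℕ) (θ : ℝ) :
    π * (ThatP j).eval (cos θ) ^ 2 = 1 + cos (2 * j * θ) - if j = 0 then 1 else 0 := by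
  rw [eval_ThatP, T_real_cos, mul_pow, inv_pow, sq_sqrt (by positivity), mul_assoc 2,
    cos_two_mul, Int.cast_natCast]
  split_ifs with hj
  · simp only [hj, CharP.cast_eq_zero, zero_mul, cos_zero]
    field_simp
    norm_num
  · field_simp
    ring

theorem two_mul_sin_mul_sum_range_cos_two_mul (k : ℕ) (θ : ℝ) :
    2 * sin θ * ∑ j ∈ range (k + 1), cos (2 * j * θ) = sin ((2 * k + 1) * θ) + sin θ := by
  have h := Real.sin_mul_sum_cos (k + 1) (2 * θ) 0
  simp only [add_zero, Nat.cast_add_one, add_sub_cancel_right, mul_div_assoc,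
    mul_div_cancel_left₀ θ two_ne_zero, mul_right_comm 2 θ] at h
  rw [mul_assoc, h, ← mul_assoc, two_mul_sin_mul_cos, add_comm]
  congr 2 <;> ring

theorem two_pi_mul_sin_mul_sum_eval_ThatP_cos_sq (k : ℕ) (θ : ℝ) :
    2 * π * sin θ * ∑ j ∈ range (k + 1), (ThatP j).eval (cos θ) ^ 2
      = (2 * k + 1) * sin θ + sin ((2 * k + 1) * θ) := by
  calc 2 * π * sin θ * ∑ j ∈ range (k + 1), (ThatP j).eval (cos θ) ^ 2
      = 2 * sin θ * ∑ j ∈ range (k + 1), π * (ThatP j).eval (cos θ) ^ 2 := by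
        rw [← Finset.mul_sum]; ring
    _ = 2 * sin θ * (k + ∑ j ∈ range (k + 1), cos (2 * j * θ)) := by
        simp_rw [pi_mul_eval_ThatP_cos_sq]
        rw [Finset.sum_sub_distrib, Finset.sum_add_distrib, Finset.sum_ite_eq',
          if_pos (mem_range.mpr k.succ_pos), Finset.sum_const, card_range, nsmul_one,
          Nat.cast_add_one]
        ring
    _ = (2 * k + 1) * sin θ + sin ((2 * k + 1) * θ) := by
        linear_combination two_mul_sin_mul_sum_range_cos_two_mul k θ

theorem kernel_polynomial_weighted_norm_general (k : ℕ) (γ : ℝ)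
    (hγ : γ ∈ Set.Ioo (-1:ℝ) 1) (θγ : ℝ) (hθγ : θγ = Real.arccos γ) :
    (∫ s in (-1:ℝ)..1, (rhoHat k γ).eval s ^ 2 / Real.sqrt (1 - s ^ 2))
        = (∑ j ∈ Finset.range (k + 1), (ThatP j).eval γ ^ 2)⁻¹
    ∧ (∫ s in (-1:ℝ)..1, (rhoHat k γ).eval s ^ 2 / Real.sqrt (1 - s ^ 2))
        = (2 * Real.pi / (2 * k + 1))
            * (1 + Real.sin ((2 * k + 1) * θγ) / ((2 * k + 1) * Real.sin θγ))⁻¹ := by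
  have hnorm : (∫ s in (-1:ℝ)..1, (rhoHat k γ).eval s ^ 2 / √(1 - s ^ 2))
      = (∑ j ∈ range (k + 1), (ThatP j).eval γ ^ 2)⁻¹ := by
    simp_rw [div_eq_mul_inv, ← Real.sqrt_inv, ← integral_measureT]
    exact integral_eval_rhoHat_sq_measureT k γ
  refine ⟨hnorm, hnorm.trans ?_⟩
  obtain ⟨hγ₁, hγ₂⟩ := hγ
  have hsin : 0 < sin θγ := by
    rw [hθγ, sin_arccos]
    exact sqrt_pos.mpr (by nlinarith)
  have hcos : cos θγ = γ := hθγ ▸ cos_arccos hγ₁.le hγ₂.le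
  have hsum := two_pi_mul_sin_mul_sum_eval_ThatP_cos_sq k θγ
  rw [hcos] at hsum
  have hS := sum_range_eval_ThatP_sq_pos k γ
  rw [one_add_div (by positivity), inv_div, ← hsum]
  field_simp

/-- Theorem on the Chebyshev-weighted `L²` integral of the kernel polynomial:
`∫₋₁¹ ρ̂_k(s)²/√(1−s²) ds = 1/(Σ_{j=0}^k T̂ⱼ(γ)²)
  = (2π/(2k+1)) · 1/(1 + sin((2k+1)θ_γ)/((2k+1) sin θ_γ))`. -/
theorem kernel_polynomial_weighted_norm (k : ℕ) (hk : 1 ≤ k) (γ : ℝ)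
    (hγ : γ ∈ Set.Ioo (-1:ℝ) 1) (θγ : ℝ) (hθγ : θγ = Real.arccos γ) :
    (∫ s in (-1:ℝ)..1, (rhoHat k γ).eval s ^ 2 / Real.sqrt (1 - s ^ 2))
        = (∑ j ∈ Finset.range (k + 1), (ThatP j).eval γ ^ 2)⁻¹
    ∧ (∫ s in (-1:ℝ)..1, (rhoHat k γ).eval s ^ 2 / Real.sqrt (1 - s ^ 2))
        = (2 * Real.pi / (2 * k + 1))
            * (1 + Real.sin ((2 * k + 1) * θγ) / ((2 * k + 1) * Real.sin θγ))⁻¹ :=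
  kernel_polynomial_weighted_norm_general k γ hγ θγ hθγ
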